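/- arXiv:math/0511454 — 2 statements merged into one kernel-verified Lean document; each statement's English description precedes it below -/
import Mathlib

section
/- Let C and D be further finite sets and ν : C ∪ D → G a map such that both ν(C) and ν(D) generate G, with N(C,D) defined analogously to N(A,B). Then the torsion subgroup T(N(A,B)) is isomorphic to the torsion subgroup T(N(C,D)); in other words, the torsion subgroup of N(A,B) depends, up to isomorphism, only on the finite abelian group G and not on the choice of A, B and μ. -/
/-!
Since `μ(A)` generates `G`, for any further family `γ : C → G` each `1 - γ(c)` is a
`ℤ[G]`-combination `∑ₐ k_{ca} (1 - μ(a))`, and the change of coordinates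
`r_c ↦ r_c - ∑ₐ k_{ca} r_a` identifies `N(A ⊔ C, B)` with `N(A, B) × M(C, B)/𝒜`.
The second factor is torsion-free: if `n x_b = s (1 - μ(b))` for all `b`, then, `μ(B)` generating
`G`, `n` divides `s (1 - g)` for every `g`, so all coefficients of `s` agree mod `n` and
`s ≡ s(e) ∑_g g`, which kills every `1 - μ(b)`. Hence `T(N(A, B)) ≅ T(N(A ⊔ C, B)) ≅ T(N(C, B))`,
and together with `N(A, B) ≅ N(B, A)` this replaces `A` by `C` and then `B` by `D`.
-/

open MonoidAlgebra

/-- The integral group ring ℤ[G]. -/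
noncomputable abbrev ZG (G : Type) [CommGroup G] := MonoidAlgebra ℤ G

variable (G : Type) [CommGroup G] (A B : Type)

/-- The subgroup 𝒜 of M(A,B) = ℤ[G] ⊗ ℤ^A ⊗ ℤ^B (identified with A → B → ℤ[G]),
consisting of the elements Σ α(a)(e − μ(b)) ⊗ a ⊗ b with α : A → ℤ[G]. -/
noncomputable def calA (μ : A ⊕ B → G) : AddSubgroup (A → B → ZG G) where
  carrier := {r | ∃ α : A → ZG G, ∀ a b, r a b = α a * (1 - MonoidAlgebra.of ℤ G (μ (Sum.inr b)))}
  add_mem' := by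
    rintro r r' ⟨α, hα⟩ ⟨α', hα'⟩
    exact ⟨α + α', fun a b => by simp [hα, hα', add_mul]⟩
  zero_mem' := ⟨0, fun a b => by simp⟩
  neg_mem' := by
    rintro r ⟨α, hα⟩
    exact ⟨-α, fun a b => by simp [hα, neg_mul]⟩

/-- The subgroup ℬ of M(A,B), consisting of the elements Σ β(b)(e − μ(a)) ⊗ a ⊗ b
with β : B → ℤ[G]. -/
noncomputable def calB (μ : A ⊕ B → G) : AddSubgroup (A → B → ZG G) where
  carrier := {r | ∃ β : B → ZG G, ∀ a b, r a b = β b * (1 - MonoidAlgebra.of ℤ G (μ (Sum.inl a)))}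
  add_mem' := by
    rintro r r' ⟨β, hβ⟩ ⟨β', hβ'⟩
    exact ⟨β + β', fun a b => by simp [hβ, hβ', add_mul]⟩
  zero_mem' := ⟨0, fun a b => by simp⟩
  neg_mem' := by
    rintro r ⟨β, hβ⟩
    exact ⟨-β, fun a b => by simp [hβ, neg_mul]⟩

section Torsion

variable {M K : Type*} [AddCommGroup M] [AddCommGroup K]

theorem AddSubgroup.prod_sup_prod (H H' : AddSubgroup M) (L L' : AddSubgroup K) :
    H.prod L ⊔ H'.prod L' = (H ⊔ H').prod (L ⊔ L') := by
  refine le_antisymm (sup_le (prod_mono le_sup_left le_sup_left)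
    (prod_mono le_sup_right le_sup_right)) ?_
  rintro ⟨x, y⟩ hxy
  obtain ⟨h, hh, h', hh', rfl⟩ := mem_sup.mp (mem_prod.mp hxy).1
  obtain ⟨l, hl, l', hl', rfl⟩ := mem_sup.mp (mem_prod.mp hxy).2
  exact add_mem_sup (x := (h, l)) (y := (h', l')) (mem_prod.mpr ⟨hh, hl⟩)
    (mem_prod.mpr ⟨hh', hl'⟩)

def AddEquiv.torsionCongr (e : M ≃+ K) : AddCommGroup.torsion M ≃+ AddCommGroup.torsion K :=
  (e.addSubgroupMap _).trans (AddEquiv.addSubgroupCongr e.map_torsion)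

def torsionProdEquivOfIsAddTorsionFree [IsAddTorsionFree K] :
    AddCommGroup.torsion (M × K) ≃+ AddCommGroup.torsion M :=
  (AddEquiv.addSubgroupCongr (by
    rw [AddCommGroup.torsion_sum,
      (AddCommGroup.isAddTorsionFree_iff_torsion_eq_bot (G := K)).mp ‹_›])).trans
    ((AddSubgroup.prodEquiv _ _).trans AddEquiv.prodUnique)

end Torsion

variable {G A B}

section GroupRing

theorem one_sub_of_mem_of_closure_eq_top {ι : Type*} {f : ι → G}
    (hf : Subgroup.closure (Set.range f) = ⊤) {J : Ideal (ZG G)}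
    (hJ : ∀ i, 1 - of ℤ G (f i) ∈ J) (g : G) : 1 - of ℤ G g ∈ J := by
  induction (hf ▸ Subgroup.mem_top g : g ∈ Subgroup.closure (Set.range f))
    using Subgroup.closure_induction with
  | mem _ hx => obtain ⟨i, rfl⟩ := hx; exact hJ i
  | one => rw [map_one, sub_self]; exact J.zero_mem
  | mul x y _ _ hx hy =>
    have : 1 - of ℤ G (x * y) = (1 - of ℤ G x) + of ℤ G x * (1 - of ℤ G y) := by
      rw [map_mul]; ring
    exact this ▸ J.add_mem hx (J.mul_mem_left _ hy)
  | inv x _ hx =>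
    have : 1 - of ℤ G x⁻¹ = -of ℤ G x⁻¹ * (1 - of ℤ G x) := by
      rw [mul_sub, mul_one, neg_mul, ← map_mul, inv_mul_cancel, map_one]; ring
    exact this ▸ J.mul_mem_left _ hx

theorem exists_one_sub_of_eq_sum {ι : Type*} [Fintype ι] {f : ι → G}
    (hf : Subgroup.closure (Set.range f) = ⊤) (g : G) :
    ∃ k : ι → ZG G, 1 - of ℤ G g = ∑ i, k i * (1 - of ℤ G (f i)) := by
  have := one_sub_of_mem_of_closure_eq_top hf
    (J := Ideal.span (Set.range fun i => 1 - of ℤ G (f i)))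
    (fun i => Ideal.subset_span ⟨i, rfl⟩) g
  obtain ⟨k, hk⟩ := Ideal.mem_span_range_iff_exists_fun.mp this
  exact ⟨k, hk.symm⟩

instance : IsAddTorsionFree (ZG G) :=
  Function.Injective.isAddTorsionFree (coeffAddEquiv (R := ℤ) (M := G)).toAddMonoidHom
    coeffAddEquiv.injective

theorem coeff_mul_one_sub_of_self (s : ZG G) (g : G) :
    (s * (1 - of ℤ G g)).coeff g = s.coeff g - s.coeff 1 := by
  simp [mul_sub, coeff_sub, of_apply, coeff_mul_single_apply]

variable [Fintype G]

variable (G) in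
noncomputable def normElement : ZG G := ∑ g, of ℤ G g

theorem coeff_normElement (g : G) : (normElement G).coeff g = 1 := by
  simp [normElement, coeff_sum, of_apply, coeff_single]

theorem normElement_mul_one_sub_of (g : G) : normElement G * (1 - of ℤ G g) = 0 := by
  rw [mul_sub, mul_one, sub_eq_zero, normElement, Finset.sum_mul]
  simp_rw [← map_mul]
  exact (Fintype.sum_equiv (Equiv.mulRight g) _ _ fun _ => rfl).symm

theorem exists_eq_mul_one_sub_of_nsmul_eq {β : B → G}
    (hβ : Subgroup.closure (Set.range β) = ⊤) {n : ℕ} (hn : n ≠ 0) {s : ZG G} {x : B → ZG G}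
    (hx : ∀ b, n • x b = s * (1 - of ℤ G (β b))) :
    ∃ t : ZG G, ∀ b, x b = t * (1 - of ℤ G (β b)) := by
  have hmod (g : G) : s * (1 - of ℤ G g) ∈ Ideal.span {(n : ZG G)} := by
    have hcolon := one_sub_of_mem_of_closure_eq_top hβ
      (J := (Ideal.span {(n : ZG G)}).colon {s}) (fun b => ?_) g
    · rwa [Submodule.mem_colon_singleton, smul_eq_mul, mul_comm] at hcolon
    · rw [Submodule.mem_colon_singleton, smul_eq_mul, mul_comm, ← hx, nsmul_eq_mul]
      exact Ideal.mul_mem_right _ _ (Ideal.mem_span_singleton_self _)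
  have hdvd (g : G) : (n : ℤ) ∣ (s - s.coeff 1 • normElement G).coeff g := by
    obtain ⟨y, hy⟩ := Ideal.mem_span_singleton.mp (hmod g)
    refine ⟨y.coeff g, ?_⟩
    rw [coeff_sub, coeff_smul, Finsupp.sub_apply, Finsupp.smul_apply, coeff_normElement,
      smul_eq_mul, mul_one, ← coeff_mul_one_sub_of_self, hy, ← nsmul_eq_mul, coeff_smul]
    simp
  obtain ⟨t, ht⟩ : ∃ t : ZG G, n • t = s - s.coeff 1 • normElement G :=
    ⟨ofCoeff (Finsupp.mapRange (· / (n : ℤ)) (Int.zero_ediv _)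
      (s - s.coeff 1 • normElement G).coeff), by
        ext g
        rw [coeff_smul, Finsupp.smul_apply, coeff_ofCoeff, Finsupp.mapRange_apply, nsmul_eq_mul,
          Int.mul_ediv_cancel' (hdvd g)]⟩
  refine ⟨t, fun b => nsmul_right_injective hn ?_⟩
  calc n • x b = s * (1 - of ℤ G (β b)) := hx b
    _ = (s - s.coeff 1 • normElement G) * (1 - of ℤ G (β b)) := by
      rw [sub_mul, smul_mul_assoc, normElement_mul_one_sub_of, smul_zero, sub_zero]
    _ = n • (t * (1 - of ℤ G (β b))) := by rw [← ht, smul_mul_assoc]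

end GroupRing

theorem isAddTorsionFree_quotient_calA [Fintype G] (μ : A ⊕ B → G)
    (hB : Subgroup.closure (Set.range fun b => μ (Sum.inr b)) = ⊤) :
    IsAddTorsionFree ((A → B → ZG G) ⧸ calA G A B μ) := by
  refine IsAddTorsionFree.of_not_isOfFinAddOrder fun y hy hfin => hy ?_
  induction y using QuotientAddGroup.induction_on with | H x =>
  obtain ⟨n, hn, hnx⟩ := isOfFinAddOrder_iff_nsmul_eq_zero.mp hfin
  rw [← QuotientAddGroup.mk_nsmul, QuotientAddGroup.eq_zero_iff] at hnx
  obtain ⟨s, hs⟩ := hnx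
  choose t ht using fun a => exists_eq_mul_one_sub_of_nsmul_eq hB hn.ne' (hs a)
  exact (QuotientAddGroup.eq_zero_iff _).mpr ⟨t, ht⟩

theorem mem_calA {μ : A ⊕ B → G} {r : A → B → ZG G} :
    r ∈ calA G A B μ ↔ ∃ α : A → ZG G, ∀ a b, r a b = α a * (1 - of ℤ G (μ (Sum.inr b))) :=
  Iff.rfl

theorem mem_calB {μ : A ⊕ B → G} {r : A → B → ZG G} :
    r ∈ calB G A B μ ↔ ∃ β : B → ZG G, ∀ a b, r a b = β b * (1 - of ℤ G (μ (Sum.inl a))) :=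
  Iff.rfl

variable (G) in
/-- `N(A,B)` for the map `μ = Sum.elim α β`, i.e. `α = μ|_A` and `β = μ|_B`. -/
abbrev NQuot (α : A → G) (β : B → G) : Type :=
  (A → B → ZG G) ⧸ (calA G A B (Sum.elim α β) ⊔ calB G A B (Sum.elim α β))

namespace NQuot

noncomputable def transposeEquiv (α : A → G) (β : B → G) : NQuot G α β ≃+ NQuot G β α :=
  QuotientAddGroup.congr _ _ { Equiv.piComm _ with map_add' := fun _ _ => rfl } <| by
    rw [AddSubgroup.map_sup, sup_comm]
    simp only [AddSubgroup.map_equiv_eq_comap_symm]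
    congr 1 <;> ext <;> simp only [AddSubgroup.mem_comap, mem_calA, mem_calB] <;>
      exact exists_congr fun _ => forall_comm

noncomputable def congrLeftEquiv {A' : Type} {α : A → G} {α' : A' → G} (β : B → G) (e : A ≃ A')
    (he : ∀ a, α' (e a) = α a) : NQuot G α β ≃+ NQuot G α' β :=
  let T : (A → B → ZG G) ≃+ (A' → B → ZG G) := AddEquiv.arrowCongr e (.refl _)
  have hT (y : A' → B → ZG G) (a : A) : T.symm y a = y (e a) := rfl
  QuotientAddGroup.congr _ _ T <| by
    simp only [AddSubgroup.map_sup, AddSubgroup.map_equiv_eq_comap_symm]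
    congr 1 <;> ext y <;> simp only [AddSubgroup.mem_comap, mem_calA, mem_calB]
    · exact (e.arrowCongr (.refl _)).exists_congr fun _ => e.forall_congr fun _ => by simp [hT]
    · exact exists_congr fun _ => e.forall_congr fun _ => by simp [hT, he]

end NQuot

section Shear

variable {C : Type} [Fintype A] (k : C → A → ZG G)

variable (B) in
noncomputable def shearEquiv : (A ⊕ C → B → ZG G) ≃+ (A → B → ZG G) × (C → B → ZG G) where
  toFun r := (fun a => r (.inl a), fun c b => r (.inr c) b - ∑ a, k c a * r (.inl a) b)
  invFun p := Sum.elim p.1 fun c b => p.2 c b + ∑ a, k c a * p.1 a b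
  left_inv r := by ext (a | c) b <;> simp
  right_inv p := by ext <;> simp
  map_add' r s := by ext <;> simp [mul_add, Finset.sum_add_distrib]; abel

theorem shearEquiv_symm_inr (p : (A → B → ZG G) × (C → B → ZG G)) (c : C) (b : B) :
    (shearEquiv B k).symm p (.inr c) b = p.2 c b + ∑ a, k c a * p.1 a b := rfl

theorem map_shearEquiv_calA (α : A → G) (γ : C → G) (β : B → G) :
    (calA G (A ⊕ C) B (Sum.elim (Sum.elim α γ) β)).map
        (shearEquiv B k : (A ⊕ C → B → ZG G) →+ _) =
      (calA G A B (Sum.elim α β)).prod (calA G C B (Sum.elim γ β)) := by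
  rw [AddSubgroup.map_equiv_eq_comap_symm]
  ext ⟨x, y⟩
  simp only [AddSubgroup.mem_comap, AddMonoidHom.coe_coe, AddSubgroup.mem_prod, mem_calA,
    Sum.elim_inr]
  constructor
  · rintro ⟨f, hf⟩
    refine ⟨⟨fun a => f (.inl a), fun a b => hf (.inl a) b⟩,
      fun c => f (.inr c) - ∑ a, k c a * f (.inl a), fun c b => ?_⟩
    have hx (a : A) : x a b = f (.inl a) * (1 - of ℤ G (β b)) := hf (.inl a) b
    have hy := hf (.inr c) b
    simp only [shearEquiv_symm_inr, hx] at hy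
    simp only [sub_mul, Finset.sum_mul, mul_assoc, ← hy, add_sub_cancel_right]
  · rintro ⟨⟨f, hf⟩, g, hg⟩
    refine ⟨Sum.elim f fun c => g c + ∑ a, k c a * f a, ?_⟩
    rintro (a | c) b
    · exact hf a b
    · simp only [shearEquiv_symm_inr, hf, hg, Sum.elim_inr, add_mul, Finset.sum_mul, mul_assoc]

theorem map_shearEquiv_calB {α : A → G} {γ : C → G}
    (hk : ∀ c, 1 - of ℤ G (γ c) = ∑ a, k c a * (1 - of ℤ G (α a))) (β : B → G) :
    (calB G (A ⊕ C) B (Sum.elim (Sum.elim α γ) β)).map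
        (shearEquiv B k : (A ⊕ C → B → ZG G) →+ _) =
      (calB G A B (Sum.elim α β)).prod (⊥ : AddSubgroup (C → B → ZG G)) := by
  rw [AddSubgroup.map_equiv_eq_comap_symm]
  ext ⟨x, y⟩
  simp only [AddSubgroup.mem_comap, AddMonoidHom.coe_coe, AddSubgroup.mem_prod, mem_calB,
    AddSubgroup.mem_bot, Sum.elim_inl]
  constructor
  · rintro ⟨g, hg⟩
    refine ⟨⟨g, fun a b => hg (.inl a) b⟩, funext fun c => funext fun b => ?_⟩
    have hx (a : A) : x a b = g b * (1 - of ℤ G (α a)) := hg (.inl a) b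
    have hy := hg (.inr c) b
    simp only [shearEquiv_symm_inr, hx, Sum.elim_inr, hk, Finset.mul_sum,
      mul_left_comm (k c _)] at hy
    exact add_eq_right.mp hy
  · rintro ⟨⟨g, hg⟩, rfl⟩
    refine ⟨g, ?_⟩
    rintro (a | c) b
    · exact hg a b
    · simp only [shearEquiv_symm_inr, hg, Sum.elim_inr, hk, Finset.mul_sum, mul_left_comm (g b),
        Pi.zero_apply, zero_add]

theorem map_shearEquiv {α : A → G} {γ : C → G}
    (hk : ∀ c, 1 - of ℤ G (γ c) = ∑ a, k c a * (1 - of ℤ G (α a))) (β : B → G) :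
    (calA G (A ⊕ C) B (Sum.elim (Sum.elim α γ) β) ⊔
        calB G (A ⊕ C) B (Sum.elim (Sum.elim α γ) β)).map
        (shearEquiv B k : (A ⊕ C → B → ZG G) →+ _) =
      (calA G A B (Sum.elim α β) ⊔ calB G A B (Sum.elim α β)).prod
        (calA G C B (Sum.elim γ β)) := by
  rw [AddSubgroup.map_sup, map_shearEquiv_calA, map_shearEquiv_calB k hk,
    AddSubgroup.prod_sup_prod, sup_bot_eq]

end Shear

namespace NQuot

variable {C : Type} [Fintype G] [Fintype A]

noncomputable def torsionSumEquiv {α : A → G} (hα : Subgroup.closure (Set.range α) = ⊤)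
    (γ : C → G) {β : B → G} (hβ : Subgroup.closure (Set.range β) = ⊤) :
    AddCommGroup.torsion (NQuot G (Sum.elim α γ) β) ≃+ AddCommGroup.torsion (NQuot G α β) :=
  let k : C → A → ZG G := fun c => (exists_one_sub_of_eq_sum hα (γ c)).choose
  have hk c : 1 - of ℤ G (γ c) = ∑ a, k c a * (1 - of ℤ G (α a)) :=
    (exists_one_sub_of_eq_sum hα (γ c)).choose_spec
  have : IsAddTorsionFree ((C → B → ZG G) ⧸ calA G C B (Sum.elim γ β)) :=
    isAddTorsionFree_quotient_calA _ hβ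
  ((QuotientAddGroup.congr _ _ (shearEquiv B k) (map_shearEquiv k hk β)).trans
    (QuotientAddGroup.prodAddEquiv _ _)).torsionCongr.trans torsionProdEquivOfIsAddTorsionFree

noncomputable def torsionCongrLeft {α : A → G} {γ : C → G} [Fintype C]
    (hα : Subgroup.closure (Set.range α) = ⊤) (hγ : Subgroup.closure (Set.range γ) = ⊤)
    {β : B → G} (hβ : Subgroup.closure (Set.range β) = ⊤) :
    AddCommGroup.torsion (NQuot G α β) ≃+ AddCommGroup.torsion (NQuot G γ β) :=
  (torsionSumEquiv hα γ hβ).symm.trans <|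
    (congrLeftEquiv β (Equiv.sumComm A C) (by rintro (a | c) <;> rfl)).torsionCongr.trans
      (torsionSumEquiv hγ α hβ)

end NQuot

/-- The torsion subgroup of N(A,B) = M(A,B)/(𝒜 + ℬ) depends, up to isomorphism, only on
the finite abelian group G, and not on the choice of the finite sets A, B and the map
μ : A ∪ B → G (with μ(A) and μ(B) generating G). -/
theorem statement3
    (G : Type) [CommGroup G] [Fintype G]
    (A B C D : Type) [Fintype A] [Fintype B] [Fintype C] [Fintype D]
    (μ : A ⊕ B → G) (ν : C ⊕ D → G)
    (hA : Subgroup.closure (Set.range fun a : A => μ (Sum.inl a)) = ⊤)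
    (hB : Subgroup.closure (Set.range fun b : B => μ (Sum.inr b)) = ⊤)
    (hC : Subgroup.closure (Set.range fun c : C => ν (Sum.inl c)) = ⊤)
    (hD : Subgroup.closure (Set.range fun d : D => ν (Sum.inr d)) = ⊤) :
    Nonempty
      ((AddCommGroup.torsion ((A → B → ZG G) ⧸ (calA G A B μ ⊔ calB G A B μ))) ≃+
       (AddCommGroup.torsion ((C → D → ZG G) ⧸ (calA G C D ν ⊔ calB G C D ν)))) :=
  ⟨(NQuot.torsionCongrLeft hA hC hB).trans <| (NQuot.transposeEquiv _ _).torsionCongr.trans <|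
    (NQuot.torsionCongrLeft hB hD hC).trans (NQuot.transposeEquiv _ _).torsionCongr⟩
end

section
/- Suppose r ∈ M(A,B) admits α, β : {p_1, …, p_n} → ℚ[G] with r(p_i,p_j) = α(p_i)(e − p_j) + β(p_j)(e − p_i) for all i, j, and suppose moreover that (α(p_i) + β(p_i))(e − p_j) ∈ ℤ[G] for all i, j = 1, …, n. Then r belongs to 𝒜 + ℬ, i.e. there exist α̃, β̃ : {p_1, …, p_n} → ℤ[G] with r(p_i,p_j) = α̃(p_i)(e − p_j) + β̃(p_j)(e − p_i) for all i, j. -/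
open MonoidAlgebra Finset

/-- The rational group ring ℚ[G]. -/
noncomputable abbrev QG (G : Type) [CommGroup G] := MonoidAlgebra ℚ G

/-- The canonical embedding ℤ[G] → ℚ[G]. -/
noncomputable def toQ (G : Type) [CommGroup G] : ZG G →ₐ[ℤ] QG G :=
  MonoidAlgebra.lift ℤ (QG G) G (MonoidAlgebra.of ℚ G)

/-- "x ∈ ℤ[G]" for an element x of ℚ[G]. -/
def MemZG (G : Type) [CommGroup G] (x : QG G) : Prop := ∃ z : ZG G, toQ G z = x

/-- G = ℤ_{m₁} × ℤ_{m₂} × ⋯ × ℤ_{mₙ}, written multiplicatively. -/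
abbrev Gr {n : ℕ} (m : Fin n → ℕ) : Type := (i : Fin n) → Multiplicative (ZMod (m i))

/-- pᵢ, the generator of the i-th factor of G. -/
def pgen {n : ℕ} (m : Fin n → ℕ) (i : Fin n) : Gr m :=
  Pi.mulSingle i (Multiplicative.ofAdd 1)

/-- Pᵢ = e + pᵢ + pᵢ² + ⋯ + pᵢ^{mᵢ−1} ∈ ℤ[G]. -/
noncomputable def Pel {n : ℕ} (m : Fin n → ℕ) (i : Fin n) : ZG (Gr m) :=
  ∑ k ∈ Finset.range (m i), (MonoidAlgebra.of ℤ (Gr m) (pgen m i)) ^ k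

/-- Qᵢ = ∏_{j ≠ i} Pⱼ ∈ ℤ[G]. -/
noncomputable def Qel {n : ℕ} (m : Fin n → ℕ) (i : Fin n) : ZG (Gr m) :=
  ∏ j ∈ Finset.univ.erase i, Pel m j

/-- N = Σ_{g ∈ G} g ∈ ℤ[G]. -/
noncomputable def Nel {n : ℕ} (m : Fin n → ℕ) [∀ i, NeZero (m i)] : ZG (Gr m) :=
  ∑ g : Gr m, MonoidAlgebra.of ℤ (Gr m) g

/-!
Reduce modulo ℤ: let `ā i : G → ℚ/ℤ` be the coefficient function of `α i` mod ℤ. The two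
hypotheses together say that `ā` is a cocycle, `ā i (e - p j) = ā j (e - p i)`, and that
`ā j + β̄ j` is fixed by every generator, hence constant. A cocycle on `∏ ℤ_{m_i}` whose sums
over the `p_i`-orbits vanish is a coboundary: integrate it along one coordinate at a time. The
orbit sums of a cocycle are constant, so after subtracting constants (which are cocycles) this
applies to `ā`. Lifting the potential to ℚ gives a genuine cocycle `δ` with `α i - δ i`
integral, and then `α̃ i = α i - δ i`, `β̃ j = β j + δ j - const` work because
`δ i (e - p j) = δ j (e - p i)`.
-/

section ShiftDiff

variable {G X Y : Type*} [CommGroup G] [AddCommGroup X] [AddCommGroup Y]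

/-- Right multiplication by `e - p`, on coefficient functions (see `coeff_mul_one_sub_of`). -/
def shiftDiff (p : G) : (G → X) →+ (G → X) where
  toFun u g := u g - u (g * p⁻¹)
  map_zero' := by ext; simp
  map_add' u v := by ext; simp only [Pi.add_apply]; abel

def orbitSum (p : G) (M : ℕ) : (G → X) →+ (G → X) where
  toFun u g := ∑ k ∈ range M, u (g * (p ^ k)⁻¹)
  map_zero' := by ext; simp
  map_add' u v := by ext; simp [sum_add_distrib]

def IsCocycle {ι : Type*} (p : ι → G) (a : ι → G → X) : Prop :=
  ∀ i j, shiftDiff (p j) (a i) = shiftDiff (p i) (a j)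

lemma shiftDiff_apply (p : G) (u : G → X) (g : G) : shiftDiff p u g = u g - u (g * p⁻¹) := rfl

lemma orbitSum_apply (p : G) (M : ℕ) (u : G → X) (g : G) :
    orbitSum p M u g = ∑ k ∈ range M, u (g * (p ^ k)⁻¹) := rfl

lemma shiftDiff_comm (p q : G) (u : G → X) :
    shiftDiff p (shiftDiff q u) = shiftDiff q (shiftDiff p u) := by
  ext g
  simp only [shiftDiff_apply, mul_right_comm g p⁻¹ q⁻¹]
  abel

lemma shiftDiff_const (p : G) (c : X) : shiftDiff p (fun _ => c) = 0 := by
  ext; simp [shiftDiff_apply]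

lemma shiftDiff_orbitSum (p q : G) (M : ℕ) (u : G → X) :
    shiftDiff q (orbitSum p M u) = orbitSum p M (shiftDiff q u) := by
  ext g
  simp only [shiftDiff_apply, orbitSum_apply, ← sum_sub_distrib, mul_right_comm g q⁻¹]

lemma orbitSum_shiftDiff_self {p : G} {M : ℕ} (hp : p ^ M = 1) (u : G → X) :
    orbitSum p M (shiftDiff p u) = 0 := by
  ext g
  simp only [orbitSum_apply, shiftDiff_apply, mul_assoc, ← mul_inv, ← pow_succ]
  rw [sum_range_sub' (fun k => u (g * (p ^ k)⁻¹)), hp]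
  simp

lemma orbitSum_const (p : G) (M : ℕ) (c : X) : orbitSum p M (fun _ => c) = fun _ => M • c := by
  ext; simp [orbitSum_apply]

lemma compLeft_shiftDiff (φ : X →+ Y) (p : G) (u : G → X) :
    φ.compLeft G (shiftDiff p u) = shiftDiff p (φ.compLeft G u) := by
  ext; simp [shiftDiff_apply]

lemma compLeft_orbitSum (φ : X →+ Y) (p : G) (M : ℕ) (u : G → X) :
    φ.compLeft G (orbitSum p M u) = orbitSum p M (φ.compLeft G u) := by
  ext; simp [orbitSum_apply]

lemma eq_of_shiftDiff_eq_zero {ι : Type*} {p : ι → G} (hp : Subgroup.closure (Set.range p) = ⊤)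
    {u : G → X} (hu : ∀ i, shiftDiff (p i) u = 0) (g h : G) : u g = u h := by
  have key : ∀ x ∈ Subgroup.closure (Set.range p), ∀ g, u (g * x) = u g := by
    intro x hx
    induction hx using Subgroup.closure_induction with
    | mem x hx =>
      obtain ⟨i, rfl⟩ := hx
      intro g
      simpa [shiftDiff_apply, sub_eq_zero] using congrFun (hu i) (g * p i)
    | one => simp
    | mul x y _ _ hx hy => intro g; rw [← mul_assoc, hy, hx]
    | inv x _ hx => intro g; rw [← hx (g * x⁻¹), inv_mul_cancel_right]
  simpa using key (h⁻¹ * g) (by simp [hp]) h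

end ShiftDiff

lemma ZMod.val_sub_one_add_one {M : ℕ} [NeZero M] (a : ZMod M) :
    (a - 1).val + 1 = if a.val = 0 then M else a.val := by
  have hlt := (a - 1).val_lt
  have hcast : (((a - 1).val + 1 : ℕ) : ZMod M) = a := by simp
  have hmod : ((a - 1).val + 1) % M = a.val := by rw [← ZMod.val_natCast, hcast]
  rcases (show (a - 1).val + 1 ≤ M by omega).eq_or_lt with h | h
  · rw [h, Nat.mod_self] at hmod
    rw [if_pos hmod.symm, h]
  · rw [Nat.mod_eq_of_lt h] at hmod
    rw [if_neg (by omega), hmod]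

section Coordinates

variable {n : ℕ} {m : Fin n → ℕ}

def coord (j : Fin n) (g : Gr m) : ℕ := (Multiplicative.toAdd (g j)).val

lemma pgen_pow (i : Fin n) (k : ℕ) :
    pgen m i ^ k = Pi.mulSingle i (Multiplicative.ofAdd (k : ZMod (m i))) := by
  rw [pgen, ← Pi.mulSingle_pow, ← ofAdd_nsmul, nsmul_one]

lemma pgen_pow_self (i : Fin n) : pgen m i ^ m i = 1 := by
  simp [pgen_pow]

lemma pgen_pow_coord [∀ i, NeZero (m i)] (j : Fin n) (g : Gr m) :
    pgen m j ^ coord j g = Pi.mulSingle j (g j) := by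
  rw [pgen_pow, coord, ZMod.natCast_zmod_val, ofAdd_toAdd]

lemma closure_range_pgen [∀ i, NeZero (m i)] : Subgroup.closure (Set.range (pgen m)) = ⊤ := by
  refine eq_top_iff.mpr fun g _ => ?_
  rw [← Finset.univ_prod_mulSingle g]
  exact Subgroup.prod_mem _ fun j _ =>
    pgen_pow_coord j g ▸ Subgroup.pow_mem _ (Subgroup.subset_closure (Set.mem_range_self j)) _

lemma coord_mul_pgen_inv_of_ne {i j : Fin n} (h : j ≠ i) (g : Gr m) :
    coord j (g * (pgen m i)⁻¹) = coord j g := by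
  simp [coord, pgen, Pi.mulSingle_eq_of_ne h]

lemma coord_mul_pgen_inv_self_add_one [∀ i, NeZero (m i)] (j : Fin n) (g : Gr m) :
    coord j (g * (pgen m j)⁻¹) + 1 = if coord j g = 0 then m j else coord j g := by
  simp only [coord, pgen, Pi.mul_apply, Pi.inv_apply, Pi.mulSingle_eq_same, toAdd_mul, toAdd_inv,
    toAdd_ofAdd, ← sub_eq_add_neg, ZMod.val_sub_one_add_one]
  exact if_congr Iff.rfl rfl rfl

end Coordinates

section Primitive

variable {n : ℕ} {m : Fin n → ℕ} {X : Type*} [AddCommGroup X]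

def primitive (j : Fin n) (b : Gr m → X) (g : Gr m) : X :=
  ∑ k ∈ range (coord j g), b (g * (pgen m j ^ k)⁻¹)

lemma shiftDiff_primitive_self [∀ i, NeZero (m i)] {j : Fin n} {b : Gr m → X}
    (hb : orbitSum (pgen m j) (m j) b = 0) : shiftDiff (pgen m j) (primitive j b) = b := by
  ext g
  have hshift : ∑ k ∈ range (coord j (g * (pgen m j)⁻¹) + 1), b (g * (pgen m j ^ k)⁻¹)
      = b g + primitive j b (g * (pgen m j)⁻¹) := by
    rw [sum_range_succ', add_comm]
    simp only [primitive, pow_succ', mul_inv, pow_zero, inv_one, mul_one, mul_assoc]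
  rw [coord_mul_pgen_inv_self_add_one] at hshift
  rw [shiftDiff_apply, sub_eq_iff_eq_add, ← hshift]
  split_ifs with h
  · simp [primitive, h, ← orbitSum_apply, hb]
  · rfl

lemma shiftDiff_primitive_of_ne {i j : Fin n} (hij : i ≠ j) {b : Gr m → X}
    (hb : shiftDiff (pgen m i) b = 0) : shiftDiff (pgen m i) (primitive j b) = 0 := by
  ext g
  have hb' : ∀ x, b (x * (pgen m i)⁻¹) = b x := fun x => by
    have hx := congrFun hb x
    rw [shiftDiff_apply, Pi.zero_apply, sub_eq_zero] at hx
    exact hx.symm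
  simp only [shiftDiff_apply, primitive, coord_mul_pgen_inv_of_ne hij.symm, Pi.zero_apply,
    sub_eq_zero]
  exact sum_congr rfl fun k _ => by rw [mul_right_comm, hb']

end Primitive

theorem IsCocycle.exists_eq_shiftDiff {n : ℕ} {m : Fin n → ℕ} [∀ i, NeZero (m i)] {X : Type*}
    [AddCommGroup X] {a : Fin n → Gr m → X} (ha : IsCocycle (pgen m) a)
    (hsum : ∀ i, orbitSum (pgen m i) (m i) (a i) = 0) :
    ∃ u : Gr m → X, ∀ i, a i = shiftDiff (pgen m i) u := by
  suffices ∀ S : Finset (Fin n), ∃ u : Gr m → X, ∀ i ∈ S, a i = shiftDiff (pgen m i) u by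
    simpa using this univ
  intro S
  induction S using Finset.induction_on with
  | empty => exact ⟨0, by simp⟩
  | insert j S hj ih =>
    obtain ⟨u, hu⟩ := ih
    set b := a j - shiftDiff (pgen m j) u
    have hb_sum : orbitSum (pgen m j) (m j) b = 0 := by
      rw [map_sub, hsum, orbitSum_shiftDiff_self (pgen_pow_self j), sub_zero]
    have hb_inv : ∀ i ∈ S, shiftDiff (pgen m i) b = 0 := fun i hi => by
      rw [map_sub, ha j i, hu i hi, shiftDiff_comm, sub_self]
    refine ⟨u + primitive j b, fun i hi => ?_⟩
    rcases mem_insert.mp hi with rfl | hi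
    · rw [map_add, shiftDiff_primitive_self hb_sum, add_sub_cancel]
    · rw [map_add, shiftDiff_primitive_of_ne (ne_of_mem_of_not_mem hi hj) (hb_inv i hi),
        add_zero, hu i hi]

section ModInt

variable {G : Type*}

abbrev RatModInt : Type := ℚ ⧸ (Int.castAddHom ℚ).range

abbrev modInt (G : Type*) : (G → ℚ) →+ (G → RatModInt) :=
  (QuotientAddGroup.mk' _).compLeft G

abbrev intCast (G : Type*) : (G → ℤ) →+ (G → ℚ) := (Int.castAddHom ℚ).compLeft G

lemma intCast_injective : Function.Injective (intCast G) :=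
  fun _ _ h => funext fun g => Int.cast_injective (congrFun h g)

lemma modInt_eq_zero_iff {f : G → ℚ} : modInt G f = 0 ↔ ∃ z, intCast G z = f := by
  simp only [funext_iff, AddMonoidHom.compLeft_apply, Function.comp_apply, Pi.zero_apply,
    QuotientAddGroup.mk'_apply, QuotientAddGroup.eq_zero_iff, AddMonoidHom.mem_range]
  exact ⟨fun h => ⟨fun g => (h g).choose, fun g => (h g).choose_spec⟩,
    fun ⟨z, hz⟩ g => ⟨z g, hz g⟩⟩

lemma modInt_intCast (z : G → ℤ) : modInt G (intCast G z) = 0 :=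
  modInt_eq_zero_iff.mpr ⟨z, rfl⟩

lemma modInt_surjective : Function.Surjective (modInt G) :=
  fun u => ⟨fun g => (u g).out, funext fun g => QuotientAddGroup.out_eq' (u g)⟩

end ModInt

lemma coeff_mul_one_sub_of {R G : Type*} [Ring R] [CommGroup G] (x : MonoidAlgebra R G) (p : G) :
    ⇑(x * (1 - of R G p)).coeff = shiftDiff p ⇑x.coeff := by
  ext g
  simp [mul_sub, shiftDiff_apply]

lemma toQ_eq_mapRingHom (G : Type) [CommGroup G] :
    (toQ G : ZG G →+* QG G) = MonoidAlgebra.mapRingHom G (Int.castRingHom ℚ) := by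
  ext <;> simp [toQ]

lemma coeff_toQ {G : Type} [CommGroup G] (z : ZG G) : ⇑(toQ G z).coeff = intCast G ⇑z.coeff := by
  ext g
  rw [← AlgHom.coe_toRingHom, toQ_eq_mapRingHom, coeff_mapRingHom]
  rfl

section Lifting

variable {n : ℕ} {m : Fin n → ℕ} [∀ i, NeZero (m i)]

theorem exists_isCocycle_lift_of_isCocycle_modInt {A : Fin n → Gr m → ℚ}
    (hA : IsCocycle (pgen m) fun i => modInt _ (A i)) :
    ∃ δ : Fin n → Gr m → ℚ, IsCocycle (pgen m) δ ∧ ∀ i, modInt _ (A i - δ i) = 0 := by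
  set a := fun i => modInt _ (A i)
  have horbit : ∀ i g, orbitSum (pgen m i) (m i) (a i) g = orbitSum (pgen m i) (m i) (a i) 1 :=
    fun i g => eq_of_shiftDiff_eq_zero closure_range_pgen (fun j => by
      rw [shiftDiff_orbitSum, hA i j, orbitSum_shiftDiff_self (pgen_pow_self i)]) g 1
  set t : Fin n → ℚ := fun i => orbitSum (pgen m i) (m i) (A i) 1 / m i
  set c : Fin n → Gr m → RatModInt := fun i _ => QuotientAddGroup.mk (t i)
  have hc : ∀ i, orbitSum (pgen m i) (m i) (c i) = orbitSum (pgen m i) (m i) (a i) := by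
    intro i
    ext g
    rw [horbit, orbitSum_const]
    simp only [a, t, ← compLeft_orbitSum]
    rw [← QuotientAddGroup.mk_nsmul, nsmul_eq_mul,
      mul_div_cancel₀ _ (by exact_mod_cast NeZero.ne (m i))]
    rfl
  obtain ⟨u, hu⟩ : ∃ u : Gr m → RatModInt, ∀ i, a i - c i = shiftDiff (pgen m i) u := by
    refine IsCocycle.exists_eq_shiftDiff (fun i j => ?_) (fun i => by rw [map_sub, hc, sub_self])
    simp only [map_sub, c, shiftDiff_const, sub_zero]
    exact hA i j
  obtain ⟨v, rfl⟩ := modInt_surjective u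
  refine ⟨fun i => shiftDiff (pgen m i) v + fun _ => t i, fun i j => ?_, fun i => ?_⟩
  · simp only [map_add, shiftDiff_const, add_zero, shiftDiff_comm (pgen m j)]
  · have hci : modInt _ (fun _ => t i) = c i := rfl
    rw [map_sub, map_add, compLeft_shiftDiff, ← hu i, hci]
    abel

theorem exists_int_decomposition {R : Fin n → Fin n → Gr m → ℤ} {A B : Fin n → Gr m → ℚ}
    (hR : ∀ i j, intCast _ (R i j) = shiftDiff (pgen m j) (A i) + shiftDiff (pgen m i) (B j))
    (hAB : ∀ i j, modInt _ (shiftDiff (pgen m j) (A i + B i)) = 0) :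
    ∃ A' B' : Fin n → Gr m → ℤ, ∀ i j,
      R i j = shiftDiff (pgen m j) (A' i) + shiftDiff (pgen m i) (B' j) := by
  have hA : IsCocycle (pgen m) fun i => modInt _ (A i) := fun i j => by
    have hRij := congrArg (modInt _) (hR i j)
    have hABji := hAB j i
    rw [modInt_intCast, map_add, compLeft_shiftDiff, compLeft_shiftDiff] at hRij
    rw [compLeft_shiftDiff, map_add, map_add] at hABji
    exact (eq_neg_of_add_eq_zero_left hRij.symm).trans (eq_neg_of_add_eq_zero_left hABji).symm
  obtain ⟨δ, hδ, hAδ⟩ := exists_isCocycle_lift_of_isCocycle_modInt hA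
  have hη : ∀ j g, modInt _ (B j + δ j) g = modInt _ (B j + δ j) 1 := fun j g =>
    eq_of_shiftDiff_eq_zero closure_range_pgen (fun i => by
      rw [show B j + δ j = (A j + B j) - (A j - δ j) by abel, map_sub, hAδ, sub_zero,
        ← compLeft_shiftDiff, hAB]) g 1
  have hBδ : ∀ j, modInt _ (B j + δ j - fun _ => B j 1 + δ j 1) = 0 := fun j =>
    funext fun g => by simpa [sub_eq_zero] using hη j g
  choose A' hA' using fun i => modInt_eq_zero_iff.mp (hAδ i)
  choose B' hB' using fun j => modInt_eq_zero_iff.mp (hBδ j)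
  refine ⟨A', B', fun i j => intCast_injective ?_⟩
  rw [hR, map_add, compLeft_shiftDiff, compLeft_shiftDiff, hA', hB', map_sub, map_sub,
    shiftDiff_const, map_add, hδ i j]
  abel

end Lifting

theorem statement12_general
    (n : ℕ) (m : Fin n → ℕ) [∀ i, NeZero (m i)]
    (r : Fin n → Fin n → ZG (Gr m))
    (α β : Fin n → QG (Gr m))
    (hr : ∀ i j, toQ (Gr m) (r i j)
      = α i * (1 - MonoidAlgebra.of ℚ (Gr m) (pgen m j))
        + β j * (1 - MonoidAlgebra.of ℚ (Gr m) (pgen m i)))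
    (h : ∀ i j, MemZG (Gr m)
      ((α i + β i) * (1 - MonoidAlgebra.of ℚ (Gr m) (pgen m j)))) :
    ∃ αt βt : Fin n → ZG (Gr m), ∀ i j,
      r i j = αt i * (1 - MonoidAlgebra.of ℤ (Gr m) (pgen m j))
        + βt j * (1 - MonoidAlgebra.of ℤ (Gr m) (pgen m i)) := by
  obtain ⟨A', B', hAB'⟩ := exists_int_decomposition (R := fun i j => ⇑(r i j).coeff)
    (A := fun i => ⇑(α i).coeff) (B := fun j => ⇑(β j).coeff)
    (fun i j => by
      rw [← coeff_toQ, hr, coeff_add, Finsupp.coe_add, coeff_mul_one_sub_of, coeff_mul_one_sub_of])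
    (fun i j => by
      obtain ⟨z, hz⟩ := h i j
      rw [← Finsupp.coe_add, ← coeff_add, ← coeff_mul_one_sub_of, ← hz, coeff_toQ, modInt_intCast])
  refine ⟨fun i => ofCoeff (Finsupp.equivFunOnFinite.symm (A' i)),
    fun j => ofCoeff (Finsupp.equivFunOnFinite.symm (B' j)), fun i j => ?_⟩
  refine coeff_injective (DFunLike.coe_injective ?_)
  rw [coeff_add, Finsupp.coe_add, coeff_mul_one_sub_of, coeff_mul_one_sub_of]
  exact hAB' i j

/-- The kernel lemma: if r ∈ M(A,B) (with A = B = {p₁, …, pₙ}) admits a representation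
r(pᵢ,pⱼ) = α(pᵢ)(e − pⱼ) + β(pⱼ)(e − pᵢ) with α, β taking values in ℚ[G], and if moreover
(α(pᵢ) + β(pᵢ))(e − pⱼ) ∈ ℤ[G] for all i, j, then r lies in 𝒜 + ℬ: there are
α̃, β̃ : {p₁, …, pₙ} → ℤ[G] with r(pᵢ,pⱼ) = α̃(pᵢ)(e − pⱼ) + β̃(pⱼ)(e − pᵢ) for all i, j. -/
theorem statement12
    (n : ℕ) (hn : 1 ≤ n) (m : Fin n → ℕ) [∀ i, NeZero (m i)]
    (r : Fin n → Fin n → ZG (Gr m))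
    (α β : Fin n → QG (Gr m))
    (hr : ∀ i j, toQ (Gr m) (r i j)
      = α i * (1 - MonoidAlgebra.of ℚ (Gr m) (pgen m j))
        + β j * (1 - MonoidAlgebra.of ℚ (Gr m) (pgen m i)))
    (h : ∀ i j, MemZG (Gr m)
      ((α i + β i) * (1 - MonoidAlgebra.of ℚ (Gr m) (pgen m j)))) :
    ∃ αt βt : Fin n → ZG (Gr m), ∀ i j,
      r i j = αt i * (1 - MonoidAlgebra.of ℤ (Gr m) (pgen m j))
        + βt j * (1 - MonoidAlgebra.of ℤ (Gr m) (pgen m i)) :=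
  statement12_general n m r α β hr h
end
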